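/- arXiv:math/0311053 — 4 statements merged into one kernel-verified Lean document; each statement's English description precedes it below -/
import Mathlib

section
/- Two nontrivial cyclic words w and u satisfy f_w(v) = f_u(v) for all freely reduced words v if and only if w and u are positive powers of a common cyclic word. -/
open Finset
noncomputable section
attribute [local instance] Classical.propDecidable

abbrev Letter (k : ℕ) := Fin k × Bool

def linv {k : ℕ} (x : Letter k) : Letter k := (x.1, !x.2)

/-- `w` is a freely reduced word: no letter is followed by its inverse. -/
def Reduced {k : ℕ} (w : List (Letter k)) : Prop :=
  ∀ i < w.length, w[i + 1]? ≠ (w[i]?).map linv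

/-- `w` is cyclically reduced. -/
def CyclRed {k : ℕ} (w : List (Letter k)) : Prop := Reduced (w ++ w)

/-- `w` and `w'` define the same cyclic word. -/
def CyclEq {k : ℕ} (w w' : List (Letter k)) : Prop := ∃ n, w' = w.rotate n

/-- the word `u` occurs in the cyclic word of `w` starting at position `i` (with wrap-around). -/
def occursAt {k : ℕ} (w u : List (Letter k)) (i : ℕ) : Prop :=
  ∀ j < u.length, w[(i + j) % w.length]? = u[j]?

/-- the number `n_w(u)` of cyclic occurrences of `u` in the cyclic word `w`. -/
def cyclCount {k : ℕ} (w u : List (Letter k)) : ℕ :=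
  ((Finset.range w.length).filter (occursAt w u)).card

/-- the frequency `f_w(u) = n_w(u)/‖w‖`. -/
def freq {k : ℕ} (w u : List (Letter k)) : ℚ := (cyclCount w u : ℚ) / (w.length : ℚ)

/-! If `w` and `u` have the same frequencies, then the reduced word `v = u^|w|` (reduced because `u`
is cyclically reduced) occurs in `u`, hence in `w`. Reading `w` cyclically from that occurrence
yields the `|u|`-periodic sequence of letters of `u`, which is therefore also `|w|`-periodic, hence
`gcd(|w|, |u|)`-periodic; its first `gcd(|w|, |u|)` letters form the common root. Conversely,
frequencies are invariant under rotation and under taking powers. -/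

open Function

theorem Function.Periodic.nat_gcd {α : Type*} {f : ℕ → α} {p q : ℕ} (hp : Periodic f p)
    (hq : Periodic f q) : Periodic f (p.gcd q) := by
  -- a period of `f` is a period of the point `f` of the shift map, so `IsPeriodicPt.gcd` applies
  have iterate_shift (n : ℕ) (F : ℕ → α) :
      (fun F j => F (j + 1))^[n] F = fun j => F (j + n) := by
    induction n with
    | zero => rfl
    | succ n ih =>
      rw [iterate_succ_apply', ih]
      funext j
      exact congrArg F (by omega)
  have periodic_iff (n : ℕ) : Periodic f n ↔ IsPeriodicPt (fun F j => F (j + 1)) n f := by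
    rw [IsPeriodicPt, IsFixedPt, iterate_shift, funext_iff]; rfl
  exact (periodic_iff _).2 (((periodic_iff p).1 hp).gcd ((periodic_iff q).1 hq))

namespace Nat

variable {p : ℕ → Prop} [DecidablePred p] {a : ℕ}

theorem count_add_of_periodic (hp : Periodic p a) (n : ℕ) :
    count p (n + a) = count p n + count p a := by
  induction n with
  | zero => simp
  | succ n ih =>
    rw [Nat.add_right_comm, count_succ, ih, count_succ]
    simp only [hp n]
    omega

theorem count_mul_of_periodic (hp : Periodic p a) (s : ℕ) : count p (s * a) = s * count p a := by
  induction s with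
  | zero => simp
  | succ s ih => rw [Nat.succ_mul, count_add_of_periodic hp, ih, Nat.succ_mul]

theorem count_shift_of_periodic (hp : Periodic p a) (n : ℕ) :
    count (fun k => p (k + n)) a = count p a := by
  have h := count_add' p a n
  rw [Nat.add_comm, count_add_of_periodic hp] at h
  omega

end Nat

namespace List

variable {α : Type*}

theorem flatten_replicate_two (z : List α) : (replicate 2 z).flatten = z ++ z := by
  simp [replicate_succ]

theorem length_flatten_replicate (s : ℕ) (z : List α) :
    (replicate s z).flatten.length = s * z.length := by
  simp

theorem getElem?_flatten_replicate {s m : ℕ} {z : List α} (hm : m < s * z.length) :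
    (replicate s z).flatten[m]? = z[m % z.length]? := by
  induction s generalizing m with
  | zero => simp at hm
  | succ s ih =>
    rw [replicate_succ, flatten_cons]
    rcases lt_or_ge m z.length with h | h
    · rw [getElem?_append_left h, Nat.mod_eq_of_lt h]
    · rw [getElem?_append_right h, ih (by rw [Nat.succ_mul] at hm; omega),
        ← Nat.mod_eq_sub_mod h]

theorem eq_flatten_replicate_of_getElem? {l z : List α} (hz : z.length ∣ l.length)
    (h : ∀ m < l.length, l[m]? = z[m % z.length]?) :
    l = (replicate (l.length / z.length) z).flatten := by
  have hlen : l.length / z.length * z.length = l.length := Nat.div_mul_cancel hz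
  apply ext_getElem?
  intro m
  rcases lt_or_ge m l.length with hm | hm
  · rw [h m hm, getElem?_flatten_replicate (by rwa [hlen])]
  · rw [getElem?_eq_none hm,
      getElem?_eq_none (by rw [length_flatten_replicate, hlen]; exact hm)]

end List

section CyclicWords

variable {k : ℕ}

theorem cyclEq_of_isRotated {l l' : List (Letter k)} (h : l ~r l') : CyclEq l l' :=
  let ⟨n, hn⟩ := h
  ⟨n, hn.symm⟩

theorem periodic_occursAt (w v : List (Letter k)) : Periodic (occursAt w v) w.length := by
  intro i
  simp only [occursAt, Nat.add_right_comm i w.length, Nat.add_mod_right]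

theorem cyclCount_eq_count (w v : List (Letter k)) :
    cyclCount w v = Nat.count (occursAt w v) w.length :=
  (Nat.count_eq_card_filter_range _ _).symm

theorem occursAt_rotate {l : List (Letter k)} (hl : l ≠ []) (v : List (Letter k)) (n : ℕ) :
    occursAt (l.rotate n) v = fun i => occursAt l v (i + n) := by
  have hp := List.length_pos_iff.2 hl
  funext i
  simp only [occursAt, List.length_rotate, List.getElem?_rotate (Nat.mod_lt _ hp),
    Nat.mod_add_mod, Nat.add_right_comm i _ n]

theorem freq_rotate (l v : List (Letter k)) (n : ℕ) : freq (l.rotate n) v = freq l v := by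
  rcases eq_or_ne l [] with rfl | hl
  · simp
  · rw [freq, freq, cyclCount_eq_count, cyclCount_eq_count, occursAt_rotate hl,
      List.length_rotate, Nat.count_shift_of_periodic (periodic_occursAt l v)]

theorem occursAt_flatten_replicate {z : List (Letter k)} (hz : z ≠ []) {s : ℕ} (hs : s ≠ 0)
    (v : List (Letter k)) : occursAt (List.replicate s z).flatten v = occursAt z v := by
  have hsz : 0 < s * z.length := Nat.mul_pos (Nat.pos_of_ne_zero hs) (List.length_pos_iff.2 hz)
  funext i
  simp only [occursAt, List.length_flatten_replicate,
    List.getElem?_flatten_replicate (Nat.mod_lt _ hsz), Nat.mod_mod_of_dvd _ (Dvd.intro_left s rfl)]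

theorem freq_flatten_replicate {z : List (Letter k)} (hz : z ≠ []) {s : ℕ} (hs : s ≠ 0)
    (v : List (Letter k)) : freq (List.replicate s z).flatten v = freq z v := by
  rw [freq, freq, cyclCount_eq_count, cyclCount_eq_count, occursAt_flatten_replicate hz hs,
    List.length_flatten_replicate, Nat.count_mul_of_periodic (periodic_occursAt z v)]
  push_cast
  exact mul_div_mul_left _ _ (Nat.cast_ne_zero.2 hs)

theorem freq_pos_iff {w : List (Letter k)} (hw : w ≠ []) (v : List (Letter k)) :
    0 < freq w v ↔ ∃ i < w.length, occursAt w v i := by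
  rw [freq, div_pos_iff_of_pos_right (by exact_mod_cast List.length_pos_iff.2 hw), Nat.cast_pos,
    cyclCount_eq_count, Nat.pos_iff_ne_zero, Nat.count_ne_iff_exists]

theorem CyclRed.getElem?_succ_mod_ne {u : List (Letter k)} (hu : CyclRed u) (hne : u ≠ [])
    (m : ℕ) : u[(m + 1) % u.length]? ≠ u[m % u.length]?.map linv := by
  have hm := Nat.mod_lt m (List.length_pos_iff.2 hne)
  rw [CyclRed, ← List.flatten_replicate_two] at hu
  have h := hu (m % u.length) (by rw [List.length_flatten_replicate]; omega)
  rwa [List.getElem?_flatten_replicate (by omega), List.getElem?_flatten_replicate (by omega),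
    Nat.mod_mod, Nat.mod_add_mod] at h

theorem CyclRed.reduced_of_getElem?_eq {u l : List (Letter k)} (hu : CyclRed u) (hne : u ≠ [])
    (h : ∀ m < l.length, l[m]? = u[m % u.length]?) : Reduced l := by
  intro m hm
  rw [h m hm]
  rcases lt_or_ge (m + 1) l.length with h1 | h1
  · rw [h (m + 1) h1]
    exact hu.getElem?_succ_mod_ne hne m
  · rw [List.getElem?_eq_none h1,
      List.getElem?_eq_getElem (Nat.mod_lt _ (List.length_pos_iff.2 hne))]
    simp

theorem exists_shift_of_freq_eq {w u : List (Letter k)} (hw : w ≠ []) (hu : CyclRed u)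
    (hune : u ≠ []) (hfreq : ∀ v, Reduced v → freq w v = freq u v) :
    ∃ i, ∀ j, w[(i + j) % w.length]? = u[j % u.length]? := by
  set v := (List.replicate w.length u).flatten
  have hv : ∀ m < v.length, v[m]? = u[m % u.length]? := fun m hm =>
    List.getElem?_flatten_replicate (by rwa [List.length_flatten_replicate] at hm)
  have hvu : 0 < freq u v := (freq_pos_iff hune v).2
    ⟨0, List.length_pos_iff.2 hune, fun j hj => by rw [Nat.zero_add, hv j hj]⟩
  obtain ⟨i, -, hi⟩ :=
    (freq_pos_iff hw v).1 (hfreq v (hu.reduced_of_getElem?_eq hune hv) ▸ hvu)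
  refine ⟨i, fun j => ?_⟩
  have hv_pos : 0 < v.length := by
    rw [List.length_flatten_replicate]
    exact Nat.mul_pos (List.length_pos_iff.2 hw) (List.length_pos_iff.2 hune)
  have hper_w : Periodic (fun j => w[(i + j) % w.length]?) v.length := by
    rw [List.length_flatten_replicate, Nat.mul_comm]
    refine Periodic.nat_mul (fun j => ?_) _
    simp only [← Nat.add_assoc, Nat.add_mod_right]
  have hper_u : Periodic (fun j => u[j % u.length]?) v.length := by
    rw [List.length_flatten_replicate]
    exact Periodic.nat_mul (fun j => by simp only [Nat.add_mod_right]) _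
  rw [← hper_w.map_mod_nat, ← hper_u.map_mod_nat]
  exact (hi _ (Nat.mod_lt _ hv_pos)).trans (hv _ (Nat.mod_lt _ hv_pos))

theorem exists_common_root {w u : List (Letter k)} (hw : w ≠ []) (hu : CyclRed u)
    (hune : u ≠ []) {i : ℕ} (h : ∀ j, w[(i + j) % w.length]? = u[j % u.length]?) :
    ∃ (z : List (Letter k)) (s t : ℕ), CyclRed z ∧ z ≠ [] ∧ 1 ≤ s ∧ 1 ≤ t ∧
      CyclEq (List.replicate s z).flatten w ∧ CyclEq (List.replicate t z).flatten u := by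
  set F : ℕ → Option (Letter k) := fun j => u[j % u.length]?
  have hFu : Periodic F u.length := fun j => by simp only [F, Nat.add_mod_right]
  have hFw : Periodic F w.length := fun j => by
    simp only [F, ← h, ← Nat.add_assoc, Nat.add_mod_right]
  set g := w.length.gcd u.length
  have hg : 0 < g := Nat.gcd_pos_of_pos_left _ (List.length_pos_iff.2 hw)
  have hgu : g ≤ u.length := Nat.le_of_dvd (List.length_pos_iff.2 hune) (Nat.gcd_dvd_right _ _)
  set z := u.take g
  have hzlen : z.length = g := List.length_take_of_le hgu
  have hFg : Periodic F g := hFw.nat_gcd hFu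
  have hz : ∀ m, z[m % g]? = F m := fun m => by
    rw [List.getElem?_take_of_lt (Nat.mod_lt _ hg), ← hFg.map_mod_nat m]
    simp only [F, Nat.mod_eq_of_lt ((Nat.mod_lt m hg).trans_le hgu)]
  have hzu : u = (List.replicate (u.length / g) z).flatten := by
    rw [← hzlen]
    refine List.eq_flatten_replicate_of_getElem? (hzlen ▸ Nat.gcd_dvd_right _ _) fun m hm => ?_
    simp only [hzlen, hz, F, Nat.mod_eq_of_lt hm]
  have hzw : w.rotate i = (List.replicate (w.length / g) z).flatten := by
    rw [← hzlen, ← List.length_rotate (n := i)]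
    refine List.eq_flatten_replicate_of_getElem?
      (by rw [hzlen, List.length_rotate]; exact Nat.gcd_dvd_left _ _) fun m hm => ?_
    rw [List.length_rotate] at hm
    rw [List.getElem?_rotate hm, hzlen, hz, Nat.add_comm, h]
  have hzz : ∀ m < (z ++ z).length, (z ++ z)[m]? = u[m % u.length]? := fun m hm => by
    rw [List.length_append] at hm
    rw [← List.flatten_replicate_two, List.getElem?_flatten_replicate (by omega), hzlen, hz]
  refine ⟨z, w.length / g, u.length / g, hu.reduced_of_getElem?_eq hune hzz,
    List.ne_nil_of_length_pos (hzlen ▸ hg),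
    Nat.div_pos (Nat.gcd_le_left _ (List.length_pos_iff.2 hw)) hg, Nat.div_pos hgu hg,
    cyclEq_of_isRotated (hzw ▸ List.IsRotated.forall w i),
    cyclEq_of_isRotated (hzu ▸ .refl u)⟩

end CyclicWords

theorem stmt3_general (k : ℕ) (w u : List (Letter k))
    (hwne : w ≠ []) (hu : CyclRed u) (hune : u ≠ []) :
    (∀ v : List (Letter k), Reduced v → freq w v = freq u v) ↔
      ∃ (z : List (Letter k)) (s t : ℕ), CyclRed z ∧ z ≠ [] ∧ 1 ≤ s ∧ 1 ≤ t ∧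
        CyclEq (List.replicate s z).flatten w ∧ CyclEq (List.replicate t z).flatten u := by
  constructor
  · intro hfreq
    obtain ⟨i, hi⟩ := exists_shift_of_freq_eq hwne hu hune hfreq
    exact exists_common_root hwne hu hune hi
  · rintro ⟨z, s, t, -, hz, hs, ht, ⟨m, rfl⟩, ⟨n, rfl⟩⟩ v -
    rw [freq_rotate, freq_rotate, freq_flatten_replicate hz (by omega),
      freq_flatten_replicate hz (by omega)]

theorem stmt3 (k : ℕ) (hk : 2 ≤ k) (w u : List (Letter k))
    (hw : CyclRed w) (hwne : w ≠ []) (hu : CyclRed u) (hune : u ≠ []) :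
    (∀ v : List (Letter k), Reduced v → freq w v = freq u v) ↔
      ∃ (z : List (Letter k)) (s t : ℕ), CyclRed z ∧ z ≠ [] ∧ 1 ≤ s ∧ 1 ≤ t ∧
        CyclEq (List.replicate s z).flatten w ∧ CyclEq (List.replicate t z).flatten u :=
  stmt3_general k w u hwne hu hune

end
end

section
/- For every m ≥ 1, the projection map π_m: Q_m → Q_{m−1} is surjective. -/
open Finset
noncomputable section
attribute [local instance] Classical.propDecidable

/-- the finite set of freely reduced words of length `m`. -/
def WordsM (k m : ℕ) : Finset (List (Letter k)) :=
  ((Finset.univ : Finset (Fin m → Letter k)).image fun f => List.ofFn f).filter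
    (fun w => Reduced w)

/-- the polyhedron `Q_m`, realized as functions supported on reduced words of length `m`. -/
def Qset (k m : ℕ) : Set (List (Letter k) → ℝ) :=
  {q | (∀ v, ¬(Reduced v ∧ v.length = m) → q v = 0) ∧
       (∀ v, 0 ≤ q v) ∧
       (∑ v ∈ WordsM k m, q v = 1) ∧
       ∀ u : List (Letter k), Reduced u → u.length = m - 1 →
         (∑ x ∈ Finset.univ.filter (fun x : Letter k => Reduced (u ++ [x])), q (u ++ [x])) =
         (∑ x ∈ Finset.univ.filter (fun x : Letter k => Reduced (x :: u)), q (x :: u)) }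

/-- the projection `π_m : Q_m → Q_{m-1}`. -/
def proj (k m : ℕ) (q : List (Letter k) → ℝ) : List (Letter k) → ℝ :=
  fun u => if Reduced u ∧ u.length = m - 1 then
    ∑ x ∈ Finset.univ.filter (fun x : Letter k => Reduced (u ++ [x])), q (u ++ [x]) else 0


/-! A lift of `p ∈ Q_n` only has to be a nonnegative weight on reduced words of length `n + 1`
whose sums over right extensions and over left extensions of each `u` both equal `p u`: that is
`π(q) = p`, and it gives the flow condition for `q`. For `n ≥ 2` the Markov extension
`p(xw) p(wy) / p(w)` of a word `xwy` works, because whether `xwy` is reduced then depends on `xw`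
and `wy` separately, and the flow condition of `p` at `w` matches the two normalizations. For
`n = 1` the middle word is empty and `p ⊗ p` must be corrected on the forbidden pairs `x x⁻¹`;
for `n = 0` the uniform distribution on letters does. -/

section Words

variable {k : ℕ}

@[simp]
lemma linv_linv (x : Letter k) : linv (linv x) = x := by simp [linv]

lemma linv_ne_self (x : Letter k) : linv x ≠ x := by simp [linv, Prod.ext_iff]

lemma eq_linv_comm {x y : Letter k} : y = linv x ↔ x = linv y := by
  constructor <;> rintro rfl <;> simp

lemma reduced_iff_isChain (w : List (Letter k)) :
    Reduced w ↔ w.IsChain (fun a b => b ≠ linv a) := by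
  rw [List.isChain_iff_getElem]
  refine ⟨fun h i hi => ?_, fun h i hi => ?_⟩
  · have := h i (by omega)
    rw [List.getElem?_eq_getElem hi, List.getElem?_eq_getElem (by omega : i < w.length)] at this
    simpa using this
  · by_cases hi' : i + 1 < w.length
    · simpa [List.getElem?_eq_getElem hi', List.getElem?_eq_getElem hi] using h i hi'
    · simp [List.getElem?_eq_none (by omega : w.length ≤ i + 1), List.getElem?_eq_getElem hi]

lemma reduced_append_singleton {u : List (Letter k)} {x : Letter k} :
    Reduced (u ++ [x]) ↔ Reduced u ∧ ∀ a ∈ u.getLast?, x ≠ linv a := by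
  simp [reduced_iff_isChain, List.isChain_append]

lemma reduced_cons {u : List (Letter k)} {x : Letter k} :
    Reduced (x :: u) ↔ (∀ a ∈ u.head?, a ≠ linv x) ∧ Reduced u := by
  simp only [reduced_iff_isChain, List.isChain_cons]

lemma reduced_nil : Reduced ([] : List (Letter k)) := by simp [reduced_iff_isChain]

lemma reduced_singleton (x : Letter k) : Reduced [x] := by simp [reduced_iff_isChain]

lemma reduced_pair {x y : Letter k} : Reduced [x, y] ↔ y ≠ linv x := by
  simp [reduced_cons, reduced_nil]

lemma Reduced.tail {u : List (Letter k)} (h : Reduced u) : Reduced u.tail := by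
  cases u with
  | nil => exact h
  | cons a r => exact (reduced_cons.1 h).2

lemma Reduced.dropLast {u : List (Letter k)} (h : Reduced u) : Reduced u.dropLast := by
  rcases eq_or_ne u [] with rfl | hne
  · exact h
  · rw [← List.dropLast_append_getLast hne, reduced_append_singleton] at h
    exact h.1

lemma reduced_append_singleton_iff_tail {u : List (Letter k)} (hu : Reduced u)
    (h2 : 2 ≤ u.length) (y : Letter k) :
    Reduced (u ++ [y]) ↔ Reduced (u.tail ++ [y]) := by
  rw [reduced_append_singleton, reduced_append_singleton, List.getLast?_tail,
    if_neg (by omega)]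
  simp [hu, hu.tail]

lemma reduced_cons_iff_dropLast {t : List (Letter k)} (ht : Reduced t)
    (h2 : 2 ≤ t.length) (x : Letter k) :
    Reduced (x :: t) ↔ Reduced (x :: t.dropLast) := by
  rw [reduced_cons, reduced_cons, List.head?_dropLast, if_pos (by omega)]
  simp [ht, ht.dropLast]

lemma mem_wordsM {m : ℕ} {v : List (Letter k)} :
    v ∈ WordsM k m ↔ Reduced v ∧ v.length = m := by
  simp only [WordsM, Finset.mem_filter, Finset.mem_image, Finset.mem_univ, true_and]
  constructor
  · rintro ⟨⟨f, rfl⟩, h⟩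
    exact ⟨h, List.length_ofFn⟩
  · rintro ⟨h, rfl⟩
    exact ⟨⟨fun i => v[(i : ℕ)], List.ofFn_getElem⟩, h⟩

lemma wordsM_zero : WordsM k 0 = {[]} := by
  ext v
  simp only [mem_wordsM, List.length_eq_zero_iff, Finset.mem_singleton]
  exact ⟨And.right, fun h => ⟨h ▸ reduced_nil, h⟩⟩

end Words

section Extensions

variable {k : ℕ}

def rightExtSum (q : List (Letter k) → ℝ) (u : List (Letter k)) : ℝ :=
  ∑ x ∈ univ.filter (fun x : Letter k => Reduced (u ++ [x])), q (u ++ [x])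

def leftExtSum (q : List (Letter k) → ℝ) (u : List (Letter k)) : ℝ :=
  ∑ x ∈ univ.filter (fun x : Letter k => Reduced (x :: u)), q (x :: u)

lemma sum_wordsM_succ {n : ℕ} (f : List (Letter k) → ℝ) :
    ∑ v ∈ WordsM k (n + 1), f v = ∑ u ∈ WordsM k n, rightExtSum f u := by
  simp only [rightExtSum]
  rw [Finset.sum_sigma']
  have hne : ∀ v ∈ WordsM k (n + 1), v ≠ [] := fun v hv h => by
    simp [mem_wordsM, h] at hv
  refine Finset.sum_bij' (fun v hv => ⟨v.dropLast, v.getLast (hne v hv)⟩)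
    (fun a _ => a.1 ++ [a.2]) ?_ ?_ ?_ ?_ ?_
  · intro v hv
    obtain ⟨hred, hlen⟩ := mem_wordsM.1 hv
    simp only [Finset.mem_sigma, mem_wordsM, Finset.mem_filter, Finset.mem_univ, true_and,
      List.dropLast_append_getLast]
    exact ⟨⟨hred.dropLast, by simp [hlen]⟩, hred⟩
  · rintro ⟨u, x⟩ ha
    simp only [Finset.mem_sigma, mem_wordsM, Finset.mem_filter, Finset.mem_univ,
      true_and] at ha
    exact mem_wordsM.2 ⟨ha.2, by simp [ha.1.2]⟩
  · intro v hv
    exact List.dropLast_append_getLast _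
  · rintro ⟨u, x⟩ _
    simp
  · intro v hv
    simp only [List.dropLast_append_getLast]

lemma le_rightExtSum_dropLast {p : List (Letter k) → ℝ} (hp : ∀ v, 0 ≤ p v)
    {u : List (Letter k)} (hu : Reduced u) (hne : u ≠ []) :
    p u ≤ rightExtSum p u.dropLast := by
  conv_lhs => rw [← List.dropLast_append_getLast hne]
  refine Finset.single_le_sum (f := fun x => p (u.dropLast ++ [x])) (fun _ _ => hp _)
    (Finset.mem_filter.2 ⟨Finset.mem_univ _, ?_⟩)
  rwa [List.dropLast_append_getLast hne]

lemma le_leftExtSum_tail {p : List (Letter k) → ℝ} (hp : ∀ v, 0 ≤ p v)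
    {u : List (Letter k)} (hu : Reduced u) (hne : u ≠ []) :
    p u ≤ leftExtSum p u.tail := by
  obtain ⟨a, r, rfl⟩ := List.exists_cons_of_ne_nil hne
  exact Finset.single_le_sum (f := fun x => p (x :: r)) (fun _ _ => hp _)
    (Finset.mem_filter.2 ⟨Finset.mem_univ _, hu⟩)

end Extensions

lemma sum_mul_div_sum_eq {ι K : Type*} [Field K] (s : Finset ι) (a : K) (b : ι → K)
    (h : ∑ i ∈ s, b i = 0 → a = 0) : ∑ i ∈ s, a * b i / ∑ i ∈ s, b i = a := by
  rw [← Finset.sum_div, ← Finset.mul_sum]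
  by_cases hT : ∑ i ∈ s, b i = 0
  · simp [hT, h hT]
  · exact mul_div_cancel_right₀ a hT

section Lifting

variable {k : ℕ}

lemma rightExtSum_nil (q : List (Letter k) → ℝ) : rightExtSum q [] = ∑ x, q [x] := by
  simp [rightExtSum, reduced_singleton]

lemma leftExtSum_nil (q : List (Letter k) → ℝ) : leftExtSum q [] = ∑ x, q [x] := by
  simp [leftExtSum, reduced_singleton]

lemma exists_proj_eq_of_marginals {n : ℕ} {p : List (Letter k) → ℝ} (hp : p ∈ Qset k n)
    (f : List (Letter k) → ℝ) (hf : ∀ v, Reduced v → v.length = n + 1 → 0 ≤ f v)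
    (hright : ∀ u, Reduced u → u.length = n → rightExtSum f u = p u)
    (hleft : ∀ u, Reduced u → u.length = n → leftExtSum f u = p u) :
    ∃ q ∈ Qset k (n + 1), proj k (n + 1) q = p := by
  obtain ⟨hp_supp, -, hp_sum, -⟩ := hp
  set q : List (Letter k) → ℝ := fun v => if Reduced v ∧ v.length = n + 1 then f v else 0
  have hq_right : ∀ u, u.length = n → rightExtSum q u = rightExtSum f u := fun u hu =>
    Finset.sum_congr rfl fun x hx => if_pos ⟨(Finset.mem_filter.1 hx).2, by simp [hu]⟩
  have hq_left : ∀ u, u.length = n → leftExtSum q u = leftExtSum f u := fun u hu =>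
    Finset.sum_congr rfl fun x hx => if_pos ⟨(Finset.mem_filter.1 hx).2, by simp [hu]⟩
  refine ⟨q, ⟨fun v hv => if_neg hv, fun v => ?_, ?_, fun u hu hlen => ?_⟩, ?_⟩
  · by_cases h : Reduced v ∧ v.length = n + 1
    · simpa only [q, if_pos h] using hf v h.1 h.2
    · simp only [q, if_neg h, le_refl]
  · rw [sum_wordsM_succ, ← hp_sum]
    refine Finset.sum_congr rfl fun u hu => ?_
    obtain ⟨hred, hlen⟩ := mem_wordsM.1 hu
    rw [hq_right u hlen, hright u hred hlen]
  · rw [Nat.add_sub_cancel] at hlen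
    change rightExtSum q u = leftExtSum q u
    rw [hq_right u hlen, hq_left u hlen, hright u hu hlen, hleft u hu hlen]
  · funext u
    by_cases h : Reduced u ∧ u.length = n
    · simp only [proj, Nat.add_sub_cancel, if_pos h]
      exact (hq_right u h.2).trans (hright u h.1 h.2)
    · simp only [proj, Nat.add_sub_cancel, if_neg h, hp_supp u h]

lemma exists_proj_eq_of_mem_Qset_zero (hk : 0 < k) {p : List (Letter k) → ℝ}
    (hp : p ∈ Qset k 0) : ∃ q ∈ Qset k 1, proj k 1 q = p := by
  have hp_nil : p [] = 1 := by simpa [wordsM_zero] using hp.2.2.1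
  have h_uniform : ∑ _x : Letter k, (2 * k : ℝ)⁻¹ = p [] := by
    have : (k : ℝ) ≠ 0 := by positivity
    rw [hp_nil, Finset.sum_const, Finset.card_univ, nsmul_eq_mul, Fintype.card_prod,
      Fintype.card_fin, Fintype.card_bool]
    push_cast
    field_simp
  refine exists_proj_eq_of_marginals hp (fun _ => (2 * k : ℝ)⁻¹) (fun _ _ _ => by positivity)
    (fun u _ hu => ?_) (fun u _ hu => ?_)
  · rw [List.length_eq_zero_iff.1 hu, rightExtSum_nil, h_uniform]
  · rw [List.length_eq_zero_iff.1 hu, leftExtSum_nil, h_uniform]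

/-- The product `p ⊗ p` on pairs of letters, with the mass of each forbidden pair `(x, x⁻¹)`
moved to `(x, x)`. -/
def pairWeight (p : List (Letter k) → ℝ) (x y : Letter k) : ℝ :=
  p [x] * p [y] + (if y = x then p [x] * p [linv x] else 0)
    - (if y = linv x then p [x] * p [linv x] else 0)

lemma pairWeight_linv (p : List (Letter k) → ℝ) (x : Letter k) :
    pairWeight p x (linv x) = 0 := by
  simp [pairWeight, linv_ne_self]

lemma pairWeight_nonneg {p : List (Letter k) → ℝ} (hp : ∀ v, 0 ≤ p v) (x y : Letter k) :
    0 ≤ pairWeight p x y := by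
  by_cases hinv : y = linv x
  · rw [hinv, pairWeight_linv]
  by_cases hself : y = x
  · subst hself
    simp only [pairWeight, ↓reduceIte, hinv, sub_zero]
    exact add_nonneg (mul_self_nonneg _) (mul_nonneg (hp _) (hp _))
  · simpa [pairWeight, hinv, hself] using mul_nonneg (hp [x]) (hp [y])

lemma sum_pairWeight_right {p : List (Letter k) → ℝ} (h1 : ∑ y, p [y] = 1) (x : Letter k) :
    ∑ y, pairWeight p x y = p [x] := by
  simp [pairWeight, Finset.sum_add_distrib, Finset.sum_sub_distrib, ← Finset.mul_sum, h1]

lemma sum_pairWeight_left {p : List (Letter k) → ℝ} (h1 : ∑ x, p [x] = 1) (y : Letter k) :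
    ∑ x, pairWeight p x y = p [y] := by
  simp only [pairWeight, eq_linv_comm (y := y), Finset.sum_add_distrib, Finset.sum_sub_distrib,
    ← Finset.sum_mul, h1, one_mul, Finset.sum_ite_eq, Finset.sum_ite_eq', Finset.mem_univ,
    if_true, linv_linv]
  ring

lemma exists_proj_eq_of_mem_Qset_one {p : List (Letter k) → ℝ} (hp : p ∈ Qset k 1) :
    ∃ q ∈ Qset k 2, proj k 2 q = p := by
  have h1 : ∑ x, p [x] = 1 := by
    rw [← rightExtSum_nil, ← hp.2.2.1, sum_wordsM_succ, wordsM_zero, Finset.sum_singleton]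
  have h_forbidden : ∀ x y, pairWeight p x y ≠ 0 → Reduced [x, y] := fun x y h =>
    reduced_pair.2 fun hy => h (hy ▸ pairWeight_linv p x)
  let f : List (Letter k) → ℝ := fun
    | [x, y] => pairWeight p x y
    | _ => 0
  refine exists_proj_eq_of_marginals hp f ?_ (fun u _ hu => ?_) (fun u _ hu => ?_)
  · rintro v - hv
    obtain ⟨x, y, rfl⟩ := List.length_eq_two.1 hv
    exact pairWeight_nonneg hp.2.1 x y
  · obtain ⟨x, rfl⟩ := List.length_eq_one_iff.1 hu
    rw [← sum_pairWeight_right h1 x, ← Finset.sum_filter_of_ne fun y _ => h_forbidden x y]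
    rfl
  · obtain ⟨y, rfl⟩ := List.length_eq_one_iff.1 hu
    rw [← sum_pairWeight_left h1 y, ← Finset.sum_filter_of_ne fun x _ => h_forbidden x y]
    rfl

/-- The weight `p(xw) p(wy) / p(w)` on `xwy`, with `p(w)` computed as `∑_y p(wy)`. -/
def markovExt (p : List (Letter k) → ℝ) (v : List (Letter k)) : ℝ :=
  p v.dropLast * p v.tail / rightExtSum p v.tail.dropLast

lemma markovExt_nonneg {p : List (Letter k) → ℝ} (hp : ∀ v, 0 ≤ p v) (v : List (Letter k)) :
    0 ≤ markovExt p v :=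
  div_nonneg (mul_nonneg (hp _) (hp _)) (Finset.sum_nonneg fun _ _ => hp _)

lemma exists_proj_eq_of_mem_Qset_of_two_le {n : ℕ} (hn : 2 ≤ n) {p : List (Letter k) → ℝ}
    (hp : p ∈ Qset k n) : ∃ q ∈ Qset k (n + 1), proj k (n + 1) q = p := by
  have hp_nonneg := hp.2.1
  have hp_flow : ∀ w, Reduced w → w.length = n - 1 → rightExtSum p w = leftExtSum p w :=
    hp.2.2.2
  refine exists_proj_eq_of_marginals hp (markovExt p) (fun v _ _ => markovExt_nonneg hp_nonneg v)
    (fun u hu hlen => ?_) (fun t ht hlen => ?_)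
  · have hne : u ≠ [] := List.ne_nil_of_length_pos (by omega)
    have hmid := hp_flow u.tail hu.tail (by simp [hlen])
    have hsum : rightExtSum (markovExt p) u =
        ∑ y ∈ univ.filter (fun y => Reduced (u.tail ++ [y])),
          p u * p (u.tail ++ [y]) / rightExtSum p u.tail := by
      rw [rightExtSum, Finset.filter_congr fun y _ =>
        reduced_append_singleton_iff_tail hu (by omega) y]
      refine Finset.sum_congr rfl fun y _ => ?_
      simp [markovExt, List.tail_append_of_ne_nil hne]
    rw [hsum]
    refine sum_mul_div_sum_eq _ _ _ fun h0 => le_antisymm ?_ (hp_nonneg u)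
    exact (le_leftExtSum_tail hp_nonneg hu hne).trans_eq (hmid.symm.trans h0)
  · have hne : t ≠ [] := List.ne_nil_of_length_pos (by omega)
    have hmid := hp_flow t.dropLast ht.dropLast (by simp [hlen])
    have hsum : leftExtSum (markovExt p) t =
        ∑ x ∈ univ.filter (fun x => Reduced (x :: t.dropLast)),
          p t * p (x :: t.dropLast) / rightExtSum p t.dropLast := by
      rw [leftExtSum, Finset.filter_congr fun x _ => reduced_cons_iff_dropLast ht (by omega) x]
      refine Finset.sum_congr rfl fun x _ => ?_
      simp [markovExt, List.dropLast_cons_of_ne_nil hne, mul_comm]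
    rw [hsum, hmid]
    refine sum_mul_div_sum_eq _ _ _ fun h0 => le_antisymm ?_ (hp_nonneg t)
    exact (le_rightExtSum_dropLast hp_nonneg ht hne).trans_eq (hmid.trans h0)

end Lifting

theorem stmt5 (k m : ℕ) (hk : 2 ≤ k) (hm : 1 ≤ m) (p : List (Letter k) → ℝ)
    (hp : p ∈ Qset k (m - 1)) : ∃ q ∈ Qset k m, proj k m q = p := by
  obtain ⟨n, rfl⟩ : ∃ n, m = n + 1 := ⟨m - 1, by omega⟩
  rw [Nat.add_sub_cancel] at hp
  rcases n with _ | _ | n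
  · exact exists_proj_eq_of_mem_Qset_zero (by omega) hp
  · exact exists_proj_eq_of_mem_Qset_one hp
  · exact exists_proj_eq_of_mem_Qset_of_two_le (by omega) hp

end
end

section
/- For a cyclic word w that is not a proper power and a nontrivial freely reduced word u, the cyclic occurrence count n_w(u) equals the number of points x in A(w) = {v^∞ : (v) = w} that have u as an initial segment. -/
open Finset
noncomputable section
attribute [local instance] Classical.propDecidable

/-- the boundary `∂F`: semi-infinite freely reduced words. -/
def Boundary (k : ℕ) := {f : ℕ → Letter k // ∀ n, f (n + 1) ≠ linv (f n)}

instance (k : ℕ) : TopologicalSpace (Boundary k) :=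
  inferInstanceAs (TopologicalSpace {f : ℕ → Letter k // ∀ n, f (n + 1) ≠ linv (f n)})

instance (k : ℕ) : MeasurableSpace (Boundary k) := borel _
instance (k : ℕ) : BorelSpace (Boundary k) := ⟨rfl⟩

/-- the shift map `T`, erasing the first letter. -/
def shiftT {k : ℕ} (ξ : Boundary k) : Boundary k := ⟨fun n => ξ.1 (n + 1), fun n => ξ.2 (n + 1)⟩

/-- the cylinder set of semi-infinite reduced words with prefix `v`. -/
def Cyl {k : ℕ} (v : List (Letter k)) : Set (Boundary k) := {ξ | ∀ i < v.length, v[i]? = some (ξ.1 i)}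

/-- `A(w) = {v^∞ : (v) = w}`. -/
def Aset {k : ℕ} (w : List (Letter k)) : Set (Boundary k) :=
  {ξ | ∃ v, CyclEq w v ∧ ∀ n, v[n % v.length]? = some (ξ.1 n)}

/- ### Auxiliary lemmas -/

theorem rot_mul' {α : Type*} (w : List α) (g : ℕ) (h : w.rotate g = w) (q : ℕ) :
    w.rotate (g * q) = w := by
  induction q with
  | zero => simp
  | succ q ih => rw [Nat.mul_succ, ← List.rotate_rotate, ih, h]

theorem rot_gcd' {α : Type*} (w : List α) : ∀ a b : ℕ, w.rotate a = w → w.rotate b = w →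
    w.rotate (Nat.gcd a b) = w := by
  intro a b
  induction a, b using Nat.gcd.induction with
  | H0 b => intro _ hb; simpa using hb
  | H1 a b ha ih =>
    intro h1 h2
    rw [Nat.gcd_rec]
    refine ih ?_ h1
    have hmul := rot_mul' w a h1 (b / a)
    have hb : a * (b / a) + b % a = b := Nat.div_add_mod b a
    calc w.rotate (b % a) = (w.rotate (a * (b/a))).rotate (b % a) := by rw [hmul]
    _ = w.rotate (a * (b/a) + b % a) := List.rotate_rotate _ _ _
    _ = w := by rw [hb, h2]

theorem flat_rep_getElem?' {α : Type*} (z : List α) : ∀ (s n : ℕ), n < s * z.length →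
    ((List.replicate s z).flatten)[n]? = z[n % z.length]? := by
  intro s
  induction s with
  | zero => intro n hn; simp at hn
  | succ s ih =>
    intro n hn
    rw [List.replicate_succ, List.flatten_cons]
    rcases lt_or_ge n z.length with h | h
    · rw [List.getElem?_append_left h, Nat.mod_eq_of_lt h]
    · rw [List.getElem?_append_right h, ih (n - z.length) (by rw [Nat.succ_mul] at hn; omega),
        Nat.mod_eq_sub_mod h]

theorem period_getElem' {α : Type*} (w : List α) (g : ℕ) (hg : 0 < g) (h : w.rotate g = w) :
    ∀ n < w.length, w[n]? = w[n % g]? := by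
  intro n
  induction n using Nat.strong_induction_on with
  | _ n ih =>
    intro hn
    rcases lt_or_ge n g with h1 | h1
    · rw [Nat.mod_eq_of_lt h1]
    · have hlen : n - g < w.length := by omega
      have h2 : w[n - g]? = w[n]? := by
        conv_lhs => rw [← h]
        rw [List.getElem?_rotate hlen]
        congr 1
        rw [Nat.mod_eq_of_lt] <;> omega
      rw [← h2, ih (n - g) (by omega) (by omega), Nat.mod_eq_sub_mod h1]

theorem power_of_rotate' {α : Type*} (w : List α) (g : ℕ) (hg : 0 < g) (hlt : g < w.length)
    (hdvd : g ∣ w.length) (h : w.rotate g = w) :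
    ∃ (z : List α) (s : ℕ), 2 ≤ s ∧ w = (List.replicate s z).flatten := by
  refine ⟨w.take g, w.length / g, ?_, ?_⟩
  · rcases hdvd with ⟨c, hc⟩
    have h2 : w.length / g = c := by rw [hc, Nat.mul_div_cancel_left _ hg]
    rw [h2]
    rcases c with _ | _ | c <;> omega
  · have hz : (w.take g).length = g := by
      rw [List.length_take]; omega
    apply List.ext_getElem?
    intro n
    rcases lt_or_ge n w.length with hn | hn
    · rw [flat_rep_getElem?' _ _ n (by rw [hz, Nat.div_mul_cancel hdvd]; exact hn),
        hz, period_getElem' w g hg h n hn, List.getElem?_take_of_lt (Nat.mod_lt _ hg)]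
    · rw [List.getElem?_eq_none hn, List.getElem?_eq_none]
      have hlen : ((List.replicate (w.length / g) (w.take g)).flatten).length
          = (w.length / g) * g := by
        simp [List.length_flatten, List.map_replicate, List.sum_replicate, hz, smul_eq_mul]
      rw [hlen, Nat.div_mul_cancel hdvd]
      exact hn

/-- If `w` is not a proper power, distinct small rotations of `w` are distinct. -/
theorem rotate_inj_of_not_power' {α : Type*} (w : List α) (hwne : w ≠ [])
    (hnp : ¬ ∃ (z : List α) (s : ℕ), 2 ≤ s ∧ w = (List.replicate s z).flatten)
    {i j : ℕ} (hi : i < w.length) (hj : j < w.length) (h : w.rotate i = w.rotate j) :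
    i = j := by
  by_contra hne
  wlog hlt : i < j generalizing i j
  · exact this hj hi h.symm (Ne.symm hne) (by omega)
  apply hnp
  have key : w.rotate (j - i) = w := by
    have a1 : w.rotate (i + (w.length - i)) = w.rotate (j + (w.length - i)) := by
      rw [← List.rotate_rotate, ← List.rotate_rotate, h]
    have e1 : i + (w.length - i) = w.length := by omega
    have e2 : j + (w.length - i) = w.length + (j - i) := by omega
    rw [e1, e2, ← List.rotate_rotate, List.rotate_length] at a1
    exact a1.symm
  set g := Nat.gcd (j - i) w.length with hgdef
  have hg0 : 0 < g := Nat.gcd_pos_of_pos_left _ (by omega)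
  have hgd : g ∣ w.length := Nat.gcd_dvd_right _ _
  have hglt : g < w.length :=
    lt_of_le_of_lt (Nat.le_of_dvd (by omega) (Nat.gcd_dvd_left _ _)) (by omega)
  exact power_of_rotate' w g hg0 hglt hgd
    (rot_gcd' w (j - i) w.length key (List.rotate_length w))

theorem stmt8 (k : ℕ) (hk : 2 ≤ k) (w u : List (Letter k)) (hw : CyclRed w) (hwne : w ≠ [])
    (hnp : ¬ ∃ (z : List (Letter k)) (s : ℕ), 2 ≤ s ∧ w = (List.replicate s z).flatten)
    (hu : Reduced u) (hune : u ≠ []) :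
    cyclCount w u = (Aset w ∩ Cyl u).ncard := by
  classical
  have hL0 : 0 < w.length := List.length_pos_iff.2 hwne
  have hmod : ∀ m : ℕ, m % w.length < w.length := fun m => Nat.mod_lt _ hL0
  -- the basic "cyclic reducedness step" lemma
  have cstep : ∀ a, a < w.length → w[(a + 1) % w.length]? ≠ (w[a]?).map linv := by
    intro a ha
    have h2 : a < (w ++ w).length := by rw [List.length_append]; omega
    have hred := hw a h2
    have e1 : (w ++ w)[a]? = w[a]? := List.getElem?_append_left ha
    have e2 : (w ++ w)[a + 1]? = w[(a + 1) % w.length]? := by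
      rcases lt_or_eq_of_le (Nat.succ_le_of_lt ha) with hlt | heq
      · rw [List.getElem?_append_left hlt, Nat.mod_eq_of_lt hlt]
      · rw [List.getElem?_append_right (by omega : w.length ≤ a + 1)]
        have e0 : (a + 1) % w.length = 0 := by rw [← heq]; exact Nat.mod_self (a + 1)
        have e1' : a + 1 - w.length = 0 := by omega
        rw [e0, e1']
    rw [e1, e2] at hred
    exact hred
  -- the function and its values
  let f : ℕ → ℕ → Letter k := fun i n => w[(i + n) % w.length]'(hmod _)
  have hfi : ∀ i n, w[(i + n) % w.length]? = some (f i n) := fun i n =>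
    List.getElem?_eq_getElem _
  have hred : ∀ i n, f i (n + 1) ≠ linv (f i n) := by
    intro i n hcon
    apply cstep ((i + n) % w.length) (hmod _)
    have e : (i + (n + 1)) % w.length = ((i + n) % w.length + 1) % w.length := by
      rw [show i + (n + 1) = (i + n) + 1 from rfl, Nat.mod_add_mod]
    calc w[((i + n) % w.length + 1) % w.length]? = w[(i + (n + 1)) % w.length]? := by rw [e]
      _ = some (f i (n + 1)) := hfi i (n + 1)
      _ = some (linv (f i n)) := by rw [hcon]
      _ = (w[(i + n) % w.length]?).map linv := by rw [hfi i n]; rfl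
  let xi : ℕ → Boundary k := fun i => ⟨f i, hred i⟩
  -- injectivity on indices below w.length
  have hinj : ∀ i < w.length, ∀ j < w.length, xi i = xi j → i = j := by
    intro i hi j hj hij
    have heqf : ∀ n, f i n = f j n := fun n => congrFun (congrArg Subtype.val hij) n
    apply rotate_inj_of_not_power' w hwne hnp hi hj
    apply List.ext_getElem?
    intro m
    rcases lt_or_ge m w.length with hm | hm
    · rw [List.getElem?_rotate hm, List.getElem?_rotate hm, Nat.add_comm m i, Nat.add_comm m j,
        hfi, hfi, heqf m]
    · rw [List.getElem?_eq_none (by rw [List.length_rotate]; exact hm),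
        List.getElem?_eq_none (by rw [List.length_rotate]; exact hm)]
  set S : Finset ℕ := (Finset.range w.length).filter (occursAt w u) with hSdef
  have hset : Aset w ∩ Cyl u = xi '' (S : Set ℕ) := by
    ext ξ
    constructor
    · rintro ⟨⟨v, ⟨n, rfl⟩, hxv⟩, hcyl⟩
      refine ⟨n % w.length, ?_, ?_⟩
      · -- membership in S
        have hxi : ∀ m, ξ.1 m = f (n % w.length) m := by
          intro m
          have h1 := (hxv m).symm
          rw [List.length_rotate, List.getElem?_rotate (hmod m)] at h1
          have e : (m % w.length + n) % w.length = (n % w.length + m) % w.length := by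
            rw [Nat.mod_add_mod, Nat.mod_add_mod, Nat.add_comm]
          rw [e, hfi (n % w.length) m] at h1
          exact Option.some_inj.mp h1
        rw [Finset.mem_coe, hSdef, Finset.mem_filter]
        refine ⟨Finset.mem_range.2 (hmod n), fun j hj => ?_⟩
        rw [hfi (n % w.length) j, ← hxi j]
        exact (hcyl j hj).symm
      · -- xi (n % w.length) = ξ
        apply Subtype.ext
        funext m
        show f (n % w.length) m = ξ.1 m
        have h1 := (hxv m).symm
        rw [List.length_rotate, List.getElem?_rotate (hmod m)] at h1
        have e : (m % w.length + n) % w.length = (n % w.length + m) % w.length := by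
          rw [Nat.mod_add_mod, Nat.mod_add_mod, Nat.add_comm]
        rw [e, hfi (n % w.length) m] at h1
        exact (Option.some_inj.mp h1).symm
    · rintro ⟨i, hiS, rfl⟩
      rw [Finset.mem_coe, hSdef, Finset.mem_filter, Finset.mem_range] at hiS
      obtain ⟨hi, hocc⟩ := hiS
      constructor
      · refine ⟨w.rotate i, ⟨i, rfl⟩, fun m => ?_⟩
        rw [List.length_rotate, List.getElem?_rotate (hmod m)]
        have e : (m % w.length + i) % w.length = (i + m) % w.length := by
          rw [Nat.mod_add_mod, Nat.add_comm]
        rw [e]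
        exact hfi i m
      · intro j hj
        rw [← hocc j hj]
        exact hfi i j
  rw [hset, Set.ncard_image_of_injOn, Set.ncard_coe_finset]
  · rfl
  · intro a ha b hb hab
    rw [Finset.mem_coe, hSdef, Finset.mem_filter, Finset.mem_range] at ha hb
    exact hinj a ha.1 b hb.1 hab

end
end

section
/- For a cyclic word w, the measure μ_w defined on cylinders by μ_w(Cyl(u)) = f_w(u) coincides with the uniform discrete probability measure on the finite set A(w), i.e., μ_w = (1/#A(w)) Σ_{x∈A(w)} δ_x. -/
open Finset
noncomputable section
attribute [local instance] Classical.propDecidable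

/-! The points of `A(w)` are the shifts `T^i(w^∞)`, `0 ≤ i < ‖w‖`, and `u` occurs at position `i`
of the cyclic word `w` exactly when `T^i(w^∞) ∈ Cyl(u)`. As `w^∞` is a periodic point of the shift
with period `‖w‖`, all fibres of `i ↦ T^i(w^∞)` on `{0, …, ‖w‖ - 1}` have the same size `c`. Hence
`‖w‖ = c · #A(w)` and `n_w(u) = c · #(A(w) ∩ Cyl(u))`, so `f_w(u)` is the proportion of `A(w)` lying
in `Cyl(u)`. -/

namespace Function.IsPeriodicPt

variable {α : Type*} {g : α → α} {x : α} {L : ℕ}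

/-- Translation by `j` modulo `L` carries the fibre over `x` onto the fibre over `g^[j] x`. -/
lemma card_filter_iterate_eq (hx : IsPeriodicPt g L x) {j : ℕ} (hj : j < L) :
    #{i ∈ range L | g^[i] x = x} = #{i ∈ range L | g^[i] x = g^[j] x} := by
  refine card_nbij' (fun i => (i + j) % L) (fun i => (i + (L - j)) % L) ?_ ?_ ?_ ?_
  · intro i hi
    simp only [coe_filter, mem_range] at hi ⊢
    refine ⟨Nat.mod_lt _ (by omega), ?_⟩
    rw [hx.iterate_mod_apply, add_comm, iterate_add_apply, hi.2]
  · intro i hi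
    simp only [coe_filter, mem_range] at hi ⊢
    refine ⟨Nat.mod_lt _ (by omega), ?_⟩
    rw [hx.iterate_mod_apply, add_comm, iterate_add_apply, hi.2, ← iterate_add_apply,
      Nat.sub_add_cancel hj.le, hx.eq]
  · intro i hi
    simp only [coe_filter, mem_range] at hi
    show ((i + j) % L + (L - j)) % L = i
    rw [Nat.mod_add_mod, add_assoc, Nat.add_sub_cancel' hj.le, Nat.add_mod_right,
      Nat.mod_eq_of_lt hi.1]
  · intro i hi
    simp only [coe_filter, mem_range] at hi
    show ((i + (L - j)) % L + j) % L = i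
    rw [Nat.mod_add_mod, add_assoc, Nat.sub_add_cancel hj.le, Nat.add_mod_right,
      Nat.mod_eq_of_lt hi.1]

lemma sum_range_iterate {M : Type*} [AddCommMonoid M] (hx : IsPeriodicPt g L x) (F : α → M) :
    ∑ i ∈ range L, F (g^[i] x) =
      #{i ∈ range L | g^[i] x = x} • ∑ y ∈ (range L).image (g^[·] x), F y := by
  rw [sum_comp, smul_sum]
  refine sum_congr rfl fun y hy => ?_
  obtain ⟨j, hj, rfl⟩ := mem_image.mp hy
  rw [hx.card_filter_iterate_eq (mem_range.mp hj)]

end Function.IsPeriodicPt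

-- Provides `MeasurableSingletonClass`, so that `dirac` can be evaluated on arbitrary sets.
instance (k : ℕ) : T2Space (Boundary k) :=
  inferInstanceAs (T2Space {f : ℕ → Letter k // ∀ n, f (n + 1) ≠ linv (f n)})

lemma List.getElem?_append_self {α : Type*} {l : List α} {n : ℕ} (hn : n < 2 * l.length) :
    (l ++ l)[n]? = l[n % l.length]? := by
  rcases lt_or_ge n l.length with h | h
  · rw [List.getElem?_append_left h, Nat.mod_eq_of_lt h]
  · rw [List.getElem?_append_right h, Nat.mod_eq_sub_mod h, Nat.mod_eq_of_lt (by omega)]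

variable {k : ℕ} {w : List (Letter k)}

lemma Boundary.ext_iff {ξ η : Boundary k} : ξ = η ↔ ∀ n, ξ.1 n = η.1 n :=
  Subtype.ext_iff.trans funext_iff

lemma CyclRed.getElem?_succ_mod_ne_s11 (hw : CyclRed w) (hne : w ≠ []) (m : ℕ) :
    w[(m + 1) % w.length]? ≠ (w[m % w.length]?).map linv := by
  have hL : 0 < w.length := List.length_pos_iff.mpr hne
  have hm : m % w.length < w.length := Nat.mod_lt _ hL
  have h := hw (m % w.length) (by rw [List.length_append]; omega)
  rwa [List.getElem?_append_self (by omega), List.getElem?_append_self (by omega),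
    Nat.mod_add_mod, Nat.mod_mod] at h

def infPow (w : List (Letter k)) (hw : CyclRed w) (hne : w ≠ []) : Boundary k :=
  ⟨fun n => w[n % w.length]'(Nat.mod_lt _ (List.length_pos_iff.mpr hne)), fun n h =>
    hw.getElem?_succ_mod_ne_s11 hne n (by simp [Nat.mod_lt, List.length_pos_iff.mpr hne, h])⟩

lemma iterate_shiftT_val (ξ : Boundary k) (i n : ℕ) : (shiftT^[i] ξ).1 n = ξ.1 (i + n) := by
  induction i generalizing n with
  | zero => simp
  | succ i ih =>
    rw [Function.iterate_succ_apply', shiftT, ih, Nat.add_right_comm i 1 n, add_assoc]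

variable (hw : CyclRed w) (hne : w ≠ [])

lemma isPeriodicPt_infPow : Function.IsPeriodicPt shiftT w.length (infPow w hw hne) := by
  refine Boundary.ext_iff.mpr fun n => ?_
  rw [iterate_shiftT_val]
  simp only [infPow, Nat.add_mod_left]

lemma getElem?_add_mod_eq_some (i n : ℕ) :
    w[(i + n) % w.length]? = some ((shiftT^[i] (infPow w hw hne)).1 n) := by
  rw [iterate_shiftT_val]
  exact List.getElem?_eq_getElem _

lemma iterate_shiftT_infPow_eq_iff (i : ℕ) (ξ : Boundary k) :
    shiftT^[i] (infPow w hw hne) = ξ ↔ ∀ n, w[(i + n) % w.length]? = some (ξ.1 n) := by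
  rw [Boundary.ext_iff]
  simp only [getElem?_add_mod_eq_some hw hne, Option.some_inj]

lemma mem_Aset_iff (ξ : Boundary k) : ξ ∈ Aset w ↔ ∃ i, shiftT^[i] (infPow w hw hne) = ξ := by
  have hL : 0 < w.length := List.length_pos_iff.mpr hne
  have rotate_mod (i n : ℕ) : (w.rotate i)[n % (w.rotate i).length]? = w[(i + n) % w.length]? := by
    rw [List.length_rotate, List.getElem?_rotate (Nat.mod_lt _ hL), Nat.mod_add_mod, add_comm]
  simp only [iterate_shiftT_infPow_eq_iff hw hne]
  constructor
  · rintro ⟨_, ⟨i, rfl⟩, h⟩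
    exact ⟨i, fun n => rotate_mod i n ▸ h n⟩
  · rintro ⟨i, h⟩
    exact ⟨w.rotate i, ⟨i, rfl⟩, fun n => (rotate_mod i n).trans (h n)⟩

lemma Aset_eq_image :
    Aset w = ↑((range w.length).image (shiftT^[·] (infPow w hw hne))) := by
  ext ξ
  rw [mem_Aset_iff hw hne, coe_image, coe_range]
  constructor
  · rintro ⟨i, rfl⟩
    exact ⟨i % w.length, Nat.mod_lt _ (List.length_pos_iff.mpr hne),
      (isPeriodicPt_infPow hw hne).iterate_mod_apply i⟩
  · rintro ⟨i, -, h⟩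
    exact ⟨i, h⟩

lemma occursAt_iff_mem_Cyl (u : List (Letter k)) (i : ℕ) :
    occursAt w u i ↔ shiftT^[i] (infPow w hw hne) ∈ Cyl u := by
  simp only [occursAt, Cyl, Set.mem_ofPred_eq, getElem?_add_mod_eq_some hw hne, eq_comm]

lemma cyclCount_eq_card_filter (u : List (Letter k)) :
    cyclCount w u = #{i ∈ range w.length | shiftT^[i] (infPow w hw hne) ∈ Cyl u} := by
  simp only [cyclCount, occursAt_iff_mem_Cyl hw hne]

lemma sum_dirac_apply_eq_card_filter {α : Type*} [MeasurableSpace α] [MeasurableSingletonClass α]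
    (s : Finset α) (A : Set α) : ∑ x ∈ s, MeasureTheory.Measure.dirac x A = #{x ∈ s | x ∈ A} := by
  simp [MeasureTheory.Measure.dirac_apply, Set.indicator_apply]

theorem stmt11_general (k : ℕ) (w : List (Letter k)) (hw : CyclRed w) (hwne : w ≠ [])
    (S : Finset (Boundary k)) (hS : (S : Set (Boundary k)) = Aset w) :
    ∀ u : List (Letter k),
      (S.card : ENNReal)⁻¹ * ∑ x ∈ S, MeasureTheory.Measure.dirac x (Cyl u) =
        ENNReal.ofReal ((freq w u : ℚ) : ℝ) := by
  intro u
  set x := infPow w hw hwne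
  have hx : Function.IsPeriodicPt shiftT w.length x := isPeriodicPt_infPow hw hwne
  have hSimage : (range w.length).image (shiftT^[·] x) = S :=
    coe_injective ((Aset_eq_image hw hwne).symm.trans hS.symm)
  set c := #{i ∈ range w.length | shiftT^[i] x = x}
  have hlen : w.length = c * #S := by
    simpa only [← card_eq_sum_ones, card_range, smul_eq_mul, hSimage]
      using hx.sum_range_iterate (fun _ => (1 : ℕ))
  have hcount : cyclCount w u = c * #{y ∈ S | y ∈ Cyl u} := by
    rw [cyclCount_eq_card_filter hw hwne, card_filter, card_filter,
      hx.sum_range_iterate (fun y => if y ∈ Cyl u then 1 else 0), hSimage, smul_eq_mul]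
  obtain ⟨hc, hS0⟩ := CanonicallyOrderedAdd.mul_pos.mp (hlen ▸ List.length_pos_iff.mpr hwne)
  rw [sum_dirac_apply_eq_card_filter, freq, hcount, hlen, Nat.cast_mul, Nat.cast_mul,
    mul_div_mul_left _ _ (Nat.cast_ne_zero.mpr hc.ne'), Rat.cast_div, Rat.cast_natCast,
    Rat.cast_natCast, ENNReal.ofReal_div_of_pos (Nat.cast_pos.mpr hS0), ENNReal.ofReal_natCast,
    ENNReal.ofReal_natCast, ENNReal.div_eq_inv_mul]

theorem stmt11 (k : ℕ) (hk : 2 ≤ k) (w : List (Letter k)) (hw : CyclRed w) (hwne : w ≠ [])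
    (S : Finset (Boundary k)) (hS : (S : Set (Boundary k)) = Aset w) :
    ∀ u : List (Letter k),
      (S.card : ENNReal)⁻¹ * ∑ x ∈ S, MeasureTheory.Measure.dirac x (Cyl u) =
        ENNReal.ofReal ((freq w u : ℚ) : ℝ) :=
  stmt11_general k w hw hwne S hS
end
end
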